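/- Let μ ∈ 𝒫({−1,1}^n) with uniform single-site marginals μ(σ_i = ±1) = 1/2 for all i, μ_t the discrete-time recombination iterate, and π the uniform measure on {−1,1}^n. Then ‖μ_t − π‖_TV ≤ (1/2) n(n−1) 2^{−t}. -/

import Mathlib

open MeasureTheory
open scoped ENNReal

/-- The Boolean cube `{−1,1}^n`. -/
abbrev Cube (n : ℕ) := Fin n → ({-1, 1} : Set ℤ)

instance : Nonempty ({-1, 1} : Set ℤ) := ⟨⟨1, by simp⟩⟩

/-- The recombination `μ_A ⊗ ν_{A^c}`. -/
noncomputable def recomb (n : ℕ) (A : Finset (Fin n)) (μ ν : Measure (Cube n)) :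
    Measure (Cube n) :=
  Measure.map (fun p : Cube n × Cube n => fun i => if i ∈ A then p.1 i else p.2 i) (μ.prod ν)

/-- The collision product `μ∘ν = 2^{−n} Σ_{A⊆[n]} μ_A ⊗ ν_{A^c}`. -/
noncomputable def collision (n : ℕ) (μ ν : Measure (Cube n)) : Measure (Cube n) :=
  ((2 : ℝ≥0∞) ^ n)⁻¹ • ∑ A : Finset (Fin n), recomb n A μ ν

/-- The discrete-time nonlinear recombination dynamics. -/
noncomputable def iterateRec (n : ℕ) (μ : Measure (Cube n)) : ℕ → Measure (Cube n)
  | 0 => μ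
  | t + 1 => collision n (iterateRec n μ t) (iterateRec n μ t)

/-- Total variation distance. -/
noncomputable def tvDist {α : Type*} [MeasurableSpace α] (μ ν : Measure α) : ℝ :=
  ⨆ E : {E : Set α // MeasurableSet E}, |(μ E.1).toReal - (ν E.1).toReal|

/-!
Unfold the recursion: `μ_t` is the law of a configuration obtained by cutting the sites into the
blocks of a uniformly random map `f : Fin n → κ`, `|κ| = 2 ^ t`, and copying every block from an
independent sample of `μ`; one collision step merges the maps of the two parents, using the
random set `A` as a tag. When `f` is injective every site comes from its own sample, so uniform
marginals make the configuration uniform. Hence `‖μ_t - π‖_TV` is at most the probability that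
`f` is not injective, which a union bound over the `n(n-1)/2` pairs of sites bounds by
`n(n-1)/2 · 2⁻ᵗ`.
-/

open Finset

theorem sum_piecewise_inl_inr {ι κ M : Type*} [Fintype ι] [DecidableEq ι] [Fintype κ]
    [AddCommMonoid M] (F : (ι → κ ⊕ κ) → M) :
    ∑ A : Finset ι, ∑ f : ι → κ, ∑ g : ι → κ, F (A.piecewise (Sum.inl ∘ f) (Sum.inr ∘ g))
      = Fintype.card (ι → κ) • ∑ h, F h := by
  -- the second component records the values of `f` and `g` that the tag `A` discards
  let merge : Finset ι × (ι → κ) × (ι → κ) → (ι → κ ⊕ κ) × (ι → κ) := fun p =>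
    (p.1.piecewise (Sum.inl ∘ p.2.1) (Sum.inr ∘ p.2.2), p.1.piecewise p.2.2 p.2.1)
  let split : (ι → κ ⊕ κ) × (ι → κ) → Finset ι × (ι → κ) × (ι → κ) := fun q =>
    (univ.filter fun i => (q.1 i).isLeft, fun i => (q.1 i).elim id fun _ => q.2 i,
      fun i => (q.1 i).elim (fun _ => q.2 i) id)
  calc _ = ∑ p : Finset ι × (ι → κ) × (ι → κ), F (merge p).1 := by
        simp only [Fintype.sum_prod_type, merge]
    _ = ∑ q : (ι → κ ⊕ κ) × (ι → κ), F q.1 := by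
        refine sum_nbij' merge split (by simp) (by simp) ?_ ?_ fun _ _ => rfl
        · rintro ⟨A, f, g⟩ -
          ext i <;> by_cases hi : i ∈ A <;> simp [merge, split, hi]
        · rintro ⟨h, e⟩ -
          ext i : 2 <;> rcases hi : h i <;> simp [merge, split, hi]
    _ = _ := by
        rw [Fintype.sum_prod_type]
        simp [smul_sum]

theorem card_eq_mul_card_filter_apply_eq {ι κ : Type*} [Fintype ι] [DecidableEq ι] [Fintype κ]
    [DecidableEq κ] {i j : ι} (hij : i ≠ j) :
    Fintype.card (ι → κ) = #{f : ι → κ | f i = f j} * Fintype.card κ := by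
  rw [← Fintype.card_coe, ← Fintype.card_prod]
  refine Fintype.card_congr
    { toFun := fun g : ι → κ => (⟨Function.update g j (g i), by simp [hij]⟩, g j)
      invFun := fun p => Function.update p.1 j p.2
      left_inv := fun g => by simp
      right_inv := fun ⟨⟨f, hf⟩, c⟩ => by
        simp only [mem_filter, mem_univ, true_and] at hf
        ext : 2 <;> simp [hij, hf] }

theorem card_not_injective_mul_le {ι κ : Type*} [Fintype ι] [DecidableEq ι] [Fintype κ]
    [DecidableEq κ] :
    #{f : ι → κ | ¬Function.Injective f} * Fintype.card κ
      ≤ (Fintype.card ι).choose 2 * Fintype.card (ι → κ) := by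
  set pairs : Finset (Sym2 ι) := {z | ¬z.IsDiag}
  have hpairs : #pairs = (Fintype.card ι).choose 2 := by
    rw [← Sym2.card_subtype_not_diag, Fintype.card_subtype]
  have hsub : ({f | ¬Function.Injective f} : Finset (ι → κ))
      ⊆ pairs.biUnion fun z => {f | (z.map f).IsDiag} := by
    intro f hf
    simp only [Function.Injective, not_forall, mem_filter, mem_univ, true_and] at hf
    obtain ⟨i, j, hfij, hij⟩ := hf
    simp only [mem_biUnion, mem_filter, mem_univ, true_and, pairs]
    exact ⟨s(i, j), by simpa using hij, by simpa using hfij⟩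
  have hpair : ∀ z ∈ pairs, #{f : ι → κ | (z.map f).IsDiag} * Fintype.card κ
      = Fintype.card (ι → κ) := by
    intro z hz
    induction z using Sym2.ind with
    | h i j =>
      simp only [mem_filter, mem_univ, true_and, Sym2.mk_isDiag_iff, pairs] at hz
      simpa using (card_eq_mul_card_filter_apply_eq hz).symm
  calc #{f : ι → κ | ¬Function.Injective f} * Fintype.card κ
      ≤ (∑ z ∈ pairs, #{f : ι → κ | (z.map f).IsDiag}) * Fintype.card κ :=
        Nat.mul_le_mul_right _ ((card_le_card hsub).trans card_biUnion_le)
    _ = _ := by rw [sum_mul, sum_congr rfl hpair, sum_const, hpairs, smul_eq_mul]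

theorem tvDist_average_le {α ι : Type*} [MeasurableSpace α] [Fintype ι] [Nonempty ι]
    (ν : ι → Measure α) [∀ i, IsProbabilityMeasure (ν i)] (π : Measure α)
    [IsProbabilityMeasure π] (s : Finset ι) (hs : ∀ i ∉ s, ν i = π) :
    tvDist ((Fintype.card ι : ℝ≥0∞)⁻¹ • ∑ i, ν i) π ≤ #s / Fintype.card ι := by
  have hcard : (Fintype.card ι : ℝ) ≠ 0 := by simp
  refine ciSup_le fun ⟨E, _⟩ => ?_
  have hdiff : (((Fintype.card ι : ℝ≥0∞)⁻¹ • ∑ i, ν i) E).toReal - (π E).toReal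
      = (Fintype.card ι : ℝ)⁻¹ * ∑ i, ((ν i E).toReal - (π E).toReal) := by
    rw [Measure.smul_apply, Measure.finsetSum_apply, smul_eq_mul, ENNReal.toReal_mul,
      ENNReal.toReal_inv, ENNReal.toReal_natCast,
      ENNReal.toReal_sum fun i _ => measure_ne_top _ _, sum_sub_distrib, sum_const, card_univ,
      nsmul_eq_mul, mul_sub, inv_mul_cancel_left₀ hcard]
  calc |(((Fintype.card ι : ℝ≥0∞)⁻¹ • ∑ i, ν i) E).toReal - (π E).toReal|
      = (Fintype.card ι : ℝ)⁻¹ * |∑ i, ((ν i E).toReal - (π E).toReal)| := by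
        rw [hdiff, abs_mul, abs_of_nonneg (by positivity)]
    _ ≤ (Fintype.card ι : ℝ)⁻¹ * ∑ i ∈ s, |(ν i E).toReal - (π E).toReal| := by
        gcongr
        rw [← sum_subset (subset_univ s) fun i _ hi => by rw [hs i hi, sub_self]]
        exact abs_sum_le_sum_abs _ _
    _ ≤ (Fintype.card ι : ℝ)⁻¹ * (#s • (1 : ℝ)) := by
        gcongr
        exact sum_le_card_nsmul _ _ _ fun i _ => abs_sub_le_of_nonneg_of_le measureReal_nonneg
          measureReal_le_one measureReal_nonneg measureReal_le_one
    _ = #s / Fintype.card ι := by rw [nsmul_one, inv_mul_eq_div]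

section Blocks

variable {n : ℕ}

noncomputable def blockLaw (κ : Type*) [Fintype κ] (μ : Measure (Cube n)) (f : Fin n → κ) :
    Measure (Cube n) :=
  (Measure.pi fun _ : κ => μ).map fun X i => X (f i) i

noncomputable def blockMixture (κ : Type*) [Fintype κ] (μ : Measure (Cube n)) :
    Measure (Cube n) :=
  (Fintype.card (Fin n → κ) : ℝ≥0∞)⁻¹ • ∑ f, blockLaw κ μ f

instance (κ : Type*) [Fintype κ] (μ : Measure (Cube n)) [IsProbabilityMeasure μ]
    (f : Fin n → κ) : IsProbabilityMeasure (blockLaw κ μ f) :=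
  Measure.isProbabilityMeasure_map (measurable_of_countable _).aemeasurable

theorem recomb_blockLaw {κ : Type*} [Fintype κ] (A : Finset (Fin n)) (μ : Measure (Cube n))
    [SigmaFinite μ] (f g : Fin n → κ) :
    recomb n A (blockLaw κ μ f) (blockLaw κ μ g)
      = blockLaw (κ ⊕ κ) μ (A.piecewise (Sum.inl ∘ f) (Sum.inr ∘ g)) := by
  rw [recomb, blockLaw, blockLaw, Measure.map_prod_map _ _ (measurable_of_countable _)
    (measurable_of_countable _), Measure.map_map (measurable_of_countable _)
    (measurable_of_countable _), blockLaw,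
    ← (measurePreserving_sumPiEquivProdPi fun _ : κ ⊕ κ => μ).map_eq,
    Measure.map_map (measurable_of_countable _) (MeasurableEquiv.measurable _)]
  congr 1
  funext X i
  by_cases hi : i ∈ A <;> simp [hi, MeasurableEquiv.sumPiEquivProdPi]

theorem recomb_sum_sum {ι : Type*} [Fintype ι] (A : Finset (Fin n)) (ν ρ : ι → Measure (Cube n))
    [∀ i, SFinite (ρ i)] :
    recomb n A (∑ i, ν i) (∑ j, ρ j) = ∑ i, ∑ j, recomb n A (ν i) (ρ j) := by
  simp only [recomb, ← Measure.sum_fintype, Measure.prod_sum]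
  rw [Measure.map_sum (measurable_of_countable _).aemeasurable]
  simp only [Measure.sum_fintype, Fintype.sum_prod_type]

theorem recomb_smul_smul (A : Finset (Fin n)) (ν ρ : Measure (Cube n)) [SFinite ρ] (c d : ℝ≥0∞) :
    recomb n A (c • ν) (d • ρ) = (c * d) • recomb n A ν ρ := by
  rw [recomb, recomb, Measure.prod_smul_left, Measure.prod_smul_right, smul_smul,
    Measure.map_smul]

theorem collision_blockMixture (κ : Type*) [Fintype κ] [Nonempty κ] (μ : Measure (Cube n))
    [SigmaFinite μ] :
    collision n (blockMixture κ μ) (blockMixture κ μ) = blockMixture (κ ⊕ κ) μ := by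
  set N : ℝ≥0∞ := (Fintype.card (Fin n → κ) : ℝ≥0∞)
  have hN : N ≠ 0 := by simp [N]
  have hN' : N ≠ ∞ := ENNReal.natCast_ne_top _
  have hcard : (Fintype.card (Fin n → κ ⊕ κ) : ℝ≥0∞) = 2 ^ n * N := by
    simp only [N, Fintype.card_fun, Fintype.card_sum, Fintype.card_fin]
    push_cast
    ring
  simp only [collision, blockMixture, recomb_smul_smul, recomb_sum_sum, recomb_blockLaw,
    ← smul_sum]
  rw [sum_piecewise_inl_inr (fun h => blockLaw (κ ⊕ κ) μ h), ← Nat.cast_smul_eq_nsmul ℝ≥0∞,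
    smul_smul, smul_smul, hcard]
  congr 1
  rw [ENNReal.mul_inv (by simp) (by simp), mul_assoc, mul_assoc, ENNReal.inv_mul_cancel hN hN',
    mul_one]

theorem blockMixture_of_unique (κ : Type*) [Fintype κ] [Unique κ] (μ : Measure (Cube n)) :
    blockMixture κ μ = μ := by
  have hlaw : blockLaw κ μ (fun _ => default) = μ := by
    conv_rhs => rw [← (measurePreserving_funUnique μ κ).map_eq]
    unfold blockLaw
    congr!
  simp [blockMixture, hlaw]

theorem exists_iterateRec_eq_blockMixture (μ : Measure (Cube n)) [SigmaFinite μ]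
    (t : ℕ) : ∃ (κ : Type) (_ : Fintype κ) (_ : Nonempty κ),
      Fintype.card κ = 2 ^ t ∧ iterateRec n μ t = blockMixture κ μ := by
  induction t with
  | zero => exact ⟨Unit, inferInstance, inferInstance, rfl, (blockMixture_of_unique Unit μ).symm⟩
  | succ t ih =>
    obtain ⟨κ, _, _, hcard, h⟩ := ih
    refine ⟨κ ⊕ κ, inferInstance, inferInstance, by rw [Fintype.card_sum, hcard]; ring, ?_⟩
    rw [iterateRec, h, collision_blockMixture]

theorem blockLaw_singleton {κ : Type*} [Fintype κ] (μ : Measure (Cube n)) [SigmaFinite μ]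
    (f : Fin n → κ) (σ : Cube n) :
    blockLaw κ μ f {σ} = ∏ j, μ {x | ∀ i, f i = j → x i = σ i} := by
  have hpre : (fun (X : κ → Cube n) i => X (f i) i) ⁻¹' {σ}
      = Set.univ.pi fun j => {x | ∀ i, f i = j → x i = σ i} := by
    ext X
    simp only [Set.mem_preimage, Set.mem_singleton_iff, funext_iff, Set.mem_pi, Set.mem_univ,
      Set.mem_ofPred_eq, true_imp_iff]
    exact ⟨fun h _ i hi => hi ▸ h i, fun h i => h _ i rfl⟩
  rw [blockLaw, Measure.map_apply (measurable_of_countable _) (measurableSet_singleton σ), hpre,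
    Measure.pi_pi]

theorem measure_coord_eq_half (μ : Measure (Cube n))
    (hbal : ∀ i : Fin n, μ {σ : Cube n | (σ i : ℤ) = 1} = 1 / 2
      ∧ μ {σ : Cube n | (σ i : ℤ) = -1} = 1 / 2) (i : Fin n) (s : ({-1, 1} : Set ℤ)) :
    μ {x | x i = s} = 2⁻¹ := by
  obtain ⟨s, hs | hs⟩ := s <;> subst hs
  · simpa [Subtype.ext_iff] using (hbal i).2
  · simpa [Subtype.ext_iff] using (hbal i).1

theorem blockLaw_of_injective {κ : Type*} [Fintype κ] (μ : Measure (Cube n))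
    [IsProbabilityMeasure μ] (hμ : ∀ i s, μ {x : Cube n | x i = s} = 2⁻¹)
    {f : Fin n → κ} (hf : Function.Injective f) :
    blockLaw κ μ f = (PMF.uniformOfFintype (Cube n)).toMeasure := by
  refine Measure.ext_iff_singleton.mpr fun σ => ?_
  rw [blockLaw_singleton, PMF.toMeasure_apply_singleton _ _ (measurableSet_singleton σ),
    PMF.uniformOfFintype_apply, ← Fintype.prod_of_injective f hf (fun i => μ {x | x i = σ i})]
  · simp [hμ, ENNReal.inv_pow]
  · intro j hj
    convert measure_univ (μ := μ)
    exact Set.eq_univ_of_forall fun x i hi => (hj ⟨i, hi⟩).elim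
  · intro i
    congr 1
    ext x
    exact ⟨fun hx i' hi' => hf hi' ▸ hx, fun hx => hx i rfl⟩

end Blocks

/-- For any balanced initial distribution `μ` on `{−1,1}^n`,
`‖μ_t − π‖_TV ≤ (1/2)n(n−1)2^{−t}` where `π` is uniform. -/
theorem stmt_15 (n : ℕ) (μ : Measure (Cube n)) [IsProbabilityMeasure μ]
    (hbal : ∀ i : Fin n, μ {σ : Cube n | (σ i : ℤ) = 1} = 1 / 2
      ∧ μ {σ : Cube n | (σ i : ℤ) = -1} = 1 / 2) (t : ℕ) :
    tvDist (iterateRec n μ t) (PMF.uniformOfFintype (Cube n)).toMeasure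
      ≤ (1 / 2) * n * (n - 1) * ((2 : ℝ) ^ t)⁻¹ := by
  classical
  obtain ⟨κ, _, _, hκ, hμt⟩ := exists_iterateRec_eq_blockMixture μ t
  have hbad := card_not_injective_mul_le (ι := Fin n) (κ := κ)
  rw [hκ, Fintype.card_fin] at hbad
  have hpos : (0 : ℝ) < Fintype.card (Fin n → κ) := Nat.cast_pos.mpr Fintype.card_pos
  calc tvDist (iterateRec n μ t) (PMF.uniformOfFintype (Cube n)).toMeasure
      ≤ #{f : Fin n → κ | ¬Function.Injective f} / Fintype.card (Fin n → κ) := by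
        rw [hμt]
        exact tvDist_average_le _ _ _ fun f hf =>
          blockLaw_of_injective μ (measure_coord_eq_half μ hbal) (by simpa using hf)
    _ ≤ n.choose 2 / 2 ^ t := by
        rw [div_le_div_iff₀ hpos (by positivity)]
        exact_mod_cast hbad
    _ = (1 / 2) * n * (n - 1) * ((2 : ℝ) ^ t)⁻¹ := by
        rw [Nat.cast_choose_two]
        ring
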